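/- In the greedy optimality setting, the greedy algorithm's total utility after d steps equals the sum of the d largest marginal gains m_{i,j} (counted with multiplicity), assuming all m_{i,j} are distinct. -/
import Mathlib


/-- With pairwise-distinct, strictly decreasing positive marginal gains
`m i j` (0-indexed in `j`), the greedy algorithm's total utility after `d` steps
equals the sum of the `d` largest marginal gains, i.e. the maximum of
`∑_{p ∈ S} m p` over all `d`-element sets `S` of batches. -/
theorem greedy_sum_eq_top_d {K : ℕ} (m : Fin K → ℕ → ℝ)
    (hpos : ∀ i j, 0 < m i j) (hdec : ∀ i, StrictAnti (m i))
    (hdist : ∀ i j i' j', (i, j) ≠ (i', j') → m i j ≠ m i' j')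
    (d : ℕ) (g : ℕ → Fin K) (cnt : ℕ → Fin K → ℕ)
    (hcnt : ∀ t i, cnt t i = ((Finset.range t).filter (fun s => g s = i)).card)
    (hgreedy : ∀ t, t < d → ∀ i, m i (cnt t i) ≤ m (g t) (cnt t (g t))) :
    IsGreatest {u : ℝ | ∃ S : Finset (Fin K × ℕ), S.card = d ∧
        u = ∑ p ∈ S, m p.1 p.2}
      (∑ t ∈ Finset.range d, m (g t) (cnt t (g t))) := by
  -- basic counting facts
  have hmono : ∀ i {t t'}, t ≤ t' → cnt t i ≤ cnt t' i := by
    intro i t t' h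
    rw [hcnt, hcnt]
    exact Finset.card_le_card
      (Finset.filter_subset_filter _ (Finset.range_subset_range.mpr h))
  have hsucc_eq : ∀ t, cnt (t + 1) (g t) = cnt t (g t) + 1 := by
    intro t
    rw [hcnt, hcnt, Finset.range_add_one, Finset.filter_insert]
    simp [Finset.card_insert_of_notMem]
  have hsucc_ne : ∀ t i, g t ≠ i → cnt (t + 1) i = cnt t i := by
    intro t i h
    rw [hcnt, hcnt, Finset.range_add_one, Finset.filter_insert, if_neg h]
  have hstrict : ∀ {s t i}, s < t → g s = i → cnt s i < cnt t i := by
    intro s t i hst hgs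
    have h1 : cnt s i + 1 = cnt (s + 1) i := by rw [← hgs, hsucc_eq]
    have h2 : cnt (s + 1) i ≤ cnt t i := hmono i (show s + 1 ≤ t from hst)
    omega
  -- greedy picks as a set
  set f : ℕ → Fin K × ℕ := fun t => (g t, cnt t (g t)) with hf
  have hinj : ∀ t ∈ Finset.range d, ∀ t' ∈ Finset.range d, f t = f t' → t = t' := by
    intro t _ t' _ h
    rcases Nat.lt_trichotomy t t' with hlt | he | hlt
    · have hg : g t = g t' := congrArg Prod.fst h
      have hc : cnt t (g t) = cnt t' (g t') := congrArg Prod.snd h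
      have hs := hstrict hlt hg
      rw [hg] at hc
      omega
    · exact he
    · have hg : g t' = g t := congrArg Prod.fst h.symm
      have hc : cnt t' (g t') = cnt t (g t) := congrArg Prod.snd h.symm
      have hs := hstrict hlt hg
      rw [hg] at hc
      omega
  set G : Finset (Fin K × ℕ) := (Finset.range d).image f with hG
  have hGcard : G.card = d := by
    rw [hG, Finset.card_image_of_injOn hinj, Finset.card_range]
  have hGSum : ∑ p ∈ G, m p.1 p.2 = ∑ t ∈ Finset.range d, m (g t) (cnt t (g t)) := by
    rw [hG, Finset.sum_image hinj]
  constructor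
  · exact ⟨G, hGcard, hGSum.symm⟩
  · rintro u ⟨S, hScard, rfl⟩
    rcases Nat.eq_zero_or_pos d with hd0 | hdpos
    · subst hd0
      rw [Finset.card_eq_zero] at hScard
      simp [hScard]
    -- everything with j < cnt d i is in G
    have hfill : ∀ t i j, j < cnt t i → (i, j) ∈ (Finset.range t).image f := by
      intro t
      induction t with
      | zero => intro i j h; rw [hcnt] at h; simp at h
      | succ t ih =>
        intro i j h
        rcases Nat.lt_or_ge j (cnt t i) with h1 | h1
        · have := ih i j h1
          refine Finset.mem_image.mpr ?_
          rcases Finset.mem_image.mp this with ⟨s, hs, hfs⟩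
          exact ⟨s, Finset.mem_range.mpr (Nat.lt_succ_of_lt (Finset.mem_range.mp hs)), hfs⟩
        · by_cases hgi : g t = i
          · have heq : cnt (t + 1) i = cnt t i + 1 := by rw [← hgi, hsucc_eq, hgi]
            have hj : j = cnt t i := by omega
            refine Finset.mem_image.mpr ⟨t, Finset.self_mem_range_succ t, ?_⟩
            rw [hf]; simp [hgi, hj]
          · have := hsucc_ne t i hgi
            omega
    -- greedy values are decreasing
    have hchain : ∀ t', t' < d → ∀ t, t ≤ t' →
        m (g t') (cnt t' (g t')) ≤ m (g t) (cnt t (g t)) := by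
      intro t'
      induction t' with
      | zero => intro _ t ht; interval_cases t; exact le_refl _
      | succ t' ih =>
        intro h t ht
        have hstep : m (g (t' + 1)) (cnt (t' + 1) (g (t' + 1))) ≤
            m (g t') (cnt t' (g t')) := by
          calc m (g (t' + 1)) (cnt (t' + 1) (g (t' + 1)))
              ≤ m (g (t' + 1)) (cnt t' (g (t' + 1))) :=
                (hdec _).antitone (hmono _ (Nat.le_succ t'))
            _ ≤ m (g t') (cnt t' (g t')) := hgreedy t' (by omega) _
        rcases Nat.eq_or_lt_of_le ht with h1 | h1
        · subst h1; exact le_refl _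
        · exact le_trans hstep (ih (by omega) t (by omega))
    set v : ℝ := m (g (d - 1)) (cnt (d - 1) (g (d - 1))) with hv
    have hout : ∀ p : Fin K × ℕ, p ∉ G → m p.1 p.2 ≤ v := by
      intro p hp
      have hge : cnt d p.1 ≤ p.2 := by
        by_contra h
        exact hp (by rw [hG]; exact hfill d p.1 p.2 (by omega))
      calc m p.1 p.2 ≤ m p.1 (cnt d p.1) := (hdec _).antitone hge
        _ ≤ m p.1 (cnt (d - 1) p.1) := (hdec _).antitone (hmono _ (by omega))
        _ ≤ v := hgreedy (d - 1) (by omega) _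
    have hin : ∀ q ∈ G, v ≤ m q.1 q.2 := by
      intro q hq
      rcases Finset.mem_image.mp hq with ⟨t, ht, rfl⟩
      exact hchain (d - 1) (by omega) t (by have := Finset.mem_range.mp ht; omega)
    -- compare sums
    have hcardeq : (S \ G).card = (G \ S).card := by
      have h1 := Finset.card_sdiff_add_card_inter S G
      have h2 := Finset.card_sdiff_add_card_inter G S
      rw [Finset.inter_comm] at h2
      omega
    have h1 : ∑ p ∈ S \ G, m p.1 p.2 ≤ (S \ G).card • v :=
      Finset.sum_le_card_nsmul _ _ _ (fun p hp => hout p (Finset.mem_sdiff.mp hp).2)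
    have h2 : (G \ S).card • v ≤ ∑ p ∈ G \ S, m p.1 p.2 :=
      Finset.card_nsmul_le_sum _ _ _ (fun q hq => hin q (Finset.mem_sdiff.mp hq).1)
    have key : ∑ p ∈ S \ G, m p.1 p.2 ≤ ∑ p ∈ G \ S, m p.1 p.2 := by
      rw [hcardeq] at h1; exact le_trans h1 h2
    calc ∑ p ∈ S, m p.1 p.2
        = ∑ p ∈ S ∩ G, m p.1 p.2 + ∑ p ∈ S \ G, m p.1 p.2 :=
          (Finset.sum_inter_add_sum_sdiff S G _).symm
      _ ≤ ∑ p ∈ S ∩ G, m p.1 p.2 + ∑ p ∈ G \ S, m p.1 p.2 := by linarith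
      _ = ∑ p ∈ G ∩ S, m p.1 p.2 + ∑ p ∈ G \ S, m p.1 p.2 := by rw [Finset.inter_comm]
      _ = ∑ p ∈ G, m p.1 p.2 := Finset.sum_inter_add_sum_sdiff G S _
      _ = ∑ t ∈ Finset.range d, m (g t) (cnt t (g t)) := hGSum
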